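/- arXiv:2106.09606 — 10 statements merged into one kernel-verified Lean document; each statement's English description precedes it below -/
import Mathlib

section
/- Let A be the 2×2 real matrix with rows (0,1) and (1,2), let b = (1,0)ᵀ ∈ ℝ², and let f(x) = ‖Ax − b‖₂² for x ∈ ℝ². Then the vector x̂₁ = (0, 1/5)ᵀ satisfies all of the following: (a) x̂₁ minimizes f(x) over {x ∈ ℝ² : ‖x‖₀ ≤ 1}; (b) x̂₁ minimizes ‖x‖₀ over {x ∈ ℝ² : f(x) ≤ 4/5}; (c) for every λ > 0, x̂₁ does NOT minimize ‖x‖₀ + (1/λ)·f(x) over ℝ². In particular, the converse implications in Proposition 1.1(i) fail: a solution that is optimal for both the cardinality-constrained and the cardinality-minimization problem need not be optimal for the regularized problem for any λ > 0. -/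
/-- The number of nonzero entries of a vector (the "ℓ₀-norm"). -/
noncomputable def card0 {n : ℕ} (x : Fin n → ℝ) : ℕ := {i | x i ≠ 0}.ncard

/-!
The residual `‖Ax - b‖₂²` equals `(x₁ - 1)² + (x₀ + 2x₁)²`. On the union of the coordinate axes
its minimum is `4/5`, attained at `x̂₁`, while `f 0 = 1 > 4/5`; this gives (a) and (b). The
regularized objective of `x̂₁` is `1 + (4/5)/λ`: it exceeds the value `2` of the exact solution
`(-2, 1)` when `λ < 4/5`, and the value `1/λ` of `0` when `λ > 1/5`, so `x̂₁` is never a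
regularized minimizer.
-/

section card0

variable {n : ℕ} {x : Fin n → ℝ}

lemma card0_eq_zero_iff : card0 x = 0 ↔ x = 0 := by
  rw [card0, Set.ncard_eq_zero (Set.toFinite _), Set.eq_empty_iff_forall_notMem, funext_iff]
  simp

@[simp]
lemma card0_zero : card0 (0 : Fin n → ℝ) = 0 :=
  card0_eq_zero_iff.mpr rfl

lemma card0_eq_of_forall_ne_zero (h : ∀ i, x i ≠ 0) : card0 x = n := by
  have hsupp : {i | x i ≠ 0} = Set.univ := Set.eq_univ_of_forall h
  rw [card0, hsupp, Set.ncard_univ, Nat.card_eq_fintype_card, Fintype.card_fin]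

lemma exists_eq_zero_of_card0_lt (h : card0 x < n) : ∃ i, x i = 0 := by
  by_contra! hne
  exact h.ne (card0_eq_of_forall_ne_zero hne)

lemma card0_eq_one_of_support_eq (i : Fin n) (hi : x i ≠ 0) (h : ∀ j ≠ i, x j = 0) :
    card0 x = 1 := by
  have hsupp : {j | x j ≠ 0} = {i} := by
    ext j
    by_cases hj : j = i
    · simp [hj, hi]
    · simp [hj, h j hj]
  rw [card0, hsupp, Set.ncard_singleton]

end card0

lemma residual_sq_eq (x : Fin 2 → ℝ) :
    ∑ i, ((!![0, 1; 1, 2] : Matrix (Fin 2) (Fin 2) ℝ).mulVec x i - ![1, 0] i) ^ 2 =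
      (x 1 - 1) ^ 2 + (x 0 + 2 * x 1) ^ 2 := by
  simp [Matrix.mulVec, dotProduct, Fin.sum_univ_two]

lemma four_fifths_le_residual_sq {x₀ x₁ : ℝ} (h : x₀ = 0 ∨ x₁ = 0) :
    4 / 5 ≤ (x₁ - 1) ^ 2 + (x₀ + 2 * x₁) ^ 2 := by
  rcases h with rfl | rfl
  · nlinarith [sq_nonneg (5 * x₁ - 1)]
  · nlinarith [sq_nonneg x₀]

lemma min_one_div_two_lt {lam : ℝ} (hlam : 0 < lam) :
    min (1 / lam) 2 < 1 + 1 / lam * (4 / 5) := by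
  rcases lt_or_ge lam (4 / 5) with h | h
  · have : 1 < 1 / lam * (4 / 5) := by
      rw [one_div_mul_eq_div, lt_div_iff₀ hlam]; linarith
    exact min_lt_of_right_lt (by linarith)
  · have : 1 / lam * (1 / 5) < 1 := by
      rw [one_div_mul_eq_div, div_lt_one hlam]; linarith
    exact min_lt_of_left_lt (by linarith)

/-- Counterexample from the proof of Proposition 1.1(i): with
`A = [[0,1],[1,2]]`, `b = (1,0)ᵀ` and `f(x) = ‖Ax - b‖₂²`, the vector `x̂₁ = (0, 1/5)ᵀ`
(a) minimizes `f` subject to `‖x‖₀ ≤ 1`, (b) minimizes `‖x‖₀` subject to `f(x) ≤ 4/5`,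
but (c) for no `λ > 0` minimizes `‖x‖₀ + (1/λ) f(x)` over `ℝ²`. -/
theorem card_reg_converse_fails :
    let A : Matrix (Fin 2) (Fin 2) ℝ := !![0, 1; 1, 2]
    let b : Fin 2 → ℝ := ![1, 0]
    let f : (Fin 2 → ℝ) → ℝ := fun x => ∑ i, (A.mulVec x i - b i) ^ 2
    let xhat : Fin 2 → ℝ := ![0, 1/5]
    (∀ x : Fin 2 → ℝ, card0 x ≤ 1 → f xhat ≤ f x) ∧
    (∀ x : Fin 2 → ℝ, f x ≤ 4/5 → card0 xhat ≤ card0 x) ∧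
    (∀ lam : ℝ, 0 < lam →
      ¬ (∀ x : Fin 2 → ℝ,
          (card0 xhat : ℝ) + (1 / lam) * f xhat ≤ (card0 x : ℝ) + (1 / lam) * f x)) := by
  intro A b f xhat
  have hf : ∀ x, f x = (x 1 - 1) ^ 2 + (x 0 + 2 * x 1) ^ 2 := residual_sq_eq
  have hf_xhat : f xhat = 4 / 5 := by norm_num [hf, xhat]
  have hf_zero : f 0 = 1 := by norm_num [hf]
  have hf_sol : f ![-2, 1] = 0 := by norm_num [hf]
  have hcard_xhat : card0 xhat = 1 :=
    card0_eq_one_of_support_eq 1 (by norm_num [xhat]) (by simp [Fin.forall_fin_two, xhat])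
  have hcard_sol : card0 (![-2, 1] : Fin 2 → ℝ) = 2 :=
    card0_eq_of_forall_ne_zero (by simp [Fin.forall_fin_two])
  refine ⟨fun x hx => ?_, fun x hx => ?_, fun lam hlam hmin => ?_⟩
  · have hsparse := exists_eq_zero_of_card0_lt (show card0 x < 2 by omega)
    rw [hf_xhat, hf]
    exact four_fifths_le_residual_sq (Fin.exists_fin_two.mp hsparse)
  · rw [hcard_xhat, Nat.one_le_iff_ne_zero]
    intro hx0
    rw [card0_eq_zero_iff.mp hx0, hf_zero] at hx
    norm_num at hx
  · have h_zero := hmin 0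
    have h_sol := hmin ![-2, 1]
    rw [hcard_xhat, hf_xhat, card0_zero, hf_zero] at h_zero
    rw [hcard_xhat, hf_xhat, hcard_sol, hf_sol] at h_sol
    push_cast at h_zero h_sol
    rcases min_lt_iff.mp (min_one_div_two_lt hlam) with h | h <;> linarith
end

section
/- Let n ∈ ℕ, X ⊆ ℝⁿ, f : ℝⁿ → ℝ and k ∈ ℕ. Suppose x* minimizes f over the set C = {x ∈ X : ‖x‖₀ ≤ k}, and suppose that every minimizer x' of f over C satisfies ‖x'‖₀ = ‖x*‖₀ (all optimal solutions have the same cardinality). Then x* also minimizes ‖x‖₀ over {x ∈ X : f(x) ≤ f(x*)}; that is, ‖x*‖₀ ≤ ‖x‖₀ for every x ∈ X with f(x) ≤ f(x*). -/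
section
variable {α β γ : Type*} [Preorder β] [LinearOrder γ] {X : Set α} {f : α → β} {g : α → γ}
  {k : γ} {xs : α}

/- A point `x` of the sublevel set with `g x ≤ k` is itself a constrained minimizer, hence
`g x = g xs`; a point with `g x > k` beats `g xs ≤ k` trivially. -/
theorem IsMinOn.isMinOn_of_constrained_minimizers_eq (hxs : g xs ≤ k)
    (hopt : IsMinOn f {x ∈ X | g x ≤ k} xs)
    (hsame : ∀ x ∈ {x ∈ X | g x ≤ k}, IsMinOn f {x ∈ X | g x ≤ k} x → g x = g xs) :
    IsMinOn g {x ∈ X | f x ≤ f xs} xs := by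
  rintro x ⟨hxX, hfx⟩
  by_cases hk : g x ≤ k
  · have hxmin : IsMinOn f {x ∈ X | g x ≤ k} x := fun y hy => hfx.trans (hopt hy)
    exact (hsame x ⟨hxX, hk⟩ hxmin).ge
  · exact hxs.trans (not_le.1 hk).le

end

theorem card_constrained_opt_solves_card_min_general
    (n : ℕ) (X : Set (Fin n → ℝ)) (f : (Fin n → ℝ) → ℝ) (k : ℕ)
    (xs : Fin n → ℝ) (hxsk : card0 xs ≤ k)
    (hopt : ∀ x ∈ X, card0 x ≤ k → f xs ≤ f x)
    (hsamecard : ∀ x' ∈ X, card0 x' ≤ k →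
      (∀ x ∈ X, card0 x ≤ k → f x' ≤ f x) → card0 x' = card0 xs) :
    ∀ x ∈ X, f x ≤ f xs → card0 xs ≤ card0 x := by
  have hmin : IsMinOn card0 {x ∈ X | f x ≤ f xs} xs :=
    IsMinOn.isMinOn_of_constrained_minimizers_eq hxsk (fun x hx => hopt x hx.1 hx.2)
      fun x' hx' hx'min => hsamecard x' hx'.1 hx'.2 fun x hx hxk => hx'min ⟨hx, hxk⟩
  exact fun x hx hfx => hmin ⟨hx, hfx⟩

/-- Proposition 1.1(ii), positive part: if `xs` optimally solves the
cardinality-constrained problem `min f(x) s.t. ‖x‖₀ ≤ k, x ∈ X`, and all optimal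
solutions of this problem share the cardinality `‖xs‖₀`, then `xs` also solves
the cardinality-minimization problem `min ‖x‖₀ s.t. f(x) ≤ f(xs), x ∈ X`. -/
theorem card_constrained_opt_solves_card_min
    (n : ℕ) (X : Set (Fin n → ℝ)) (f : (Fin n → ℝ) → ℝ) (k : ℕ)
    (xs : Fin n → ℝ) (hxsX : xs ∈ X) (hxsk : card0 xs ≤ k)
    (hopt : ∀ x ∈ X, card0 x ≤ k → f xs ≤ f x)
    (hsamecard : ∀ x' ∈ X, card0 x' ≤ k →
      (∀ x ∈ X, card0 x ≤ k → f x' ≤ f x) → card0 x' = card0 xs) :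
    ∀ x ∈ X, f x ≤ f xs → card0 xs ≤ card0 x :=
  card_constrained_opt_solves_card_min_general n X f k xs hxsk hopt hsamecard
end

section
/- Let n ∈ ℕ, X ⊆ ℝⁿ, f : ℝⁿ → ℝ and δ ≥ 0. Suppose x* minimizes ‖x‖₀ over the set D = {x ∈ X : f(x) ≤ δ}, and suppose that every minimizer x' of ‖x‖₀ over D satisfies f(x') = f(x*) (all optimal solutions have the same objective value under f). Then x* also minimizes f over {x ∈ X : ‖x‖₀ ≤ ‖x*‖₀}; that is, f(x*) ≤ f(x) for every x ∈ X with ‖x‖₀ ≤ ‖x*‖₀. -/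
/-!
A point `x ∈ X` with `‖x‖₀ ≤ ‖x*‖₀` is either infeasible for the cardinality-minimization
problem, so `f x > δ ≥ f x*`, or feasible, and then it is itself a minimizer of `‖·‖₀`, so
`f x = f x*` by the equal-value assumption.
-/

section Sublevel

variable {α β γ : Type*} [Preorder β] [LinearOrder γ]

theorem IsMinOn.of_le {g : α → β} {s : Set α} {a b : α} (ha : IsMinOn g s a)
    (hb : g b ≤ g a) : IsMinOn g s b :=
  fun _ hx => hb.trans (ha hx)

theorem isMinOn_of_isMinOn_sublevel {f : α → γ} {g : α → β} {X : Set α} {δ : γ} {xs : α}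
    (hxsδ : f xs ≤ δ) (hmin : IsMinOn g {x ∈ X | f x ≤ δ} xs)
    (hsame : ∀ x ∈ X, f x ≤ δ → IsMinOn g {x ∈ X | f x ≤ δ} x → f x = f xs) :
    IsMinOn f {x ∈ X | g x ≤ g xs} xs := by
  rintro x ⟨hxX, hcard⟩
  by_cases hfx : f x ≤ δ
  · exact (hsame x hxX hfx (hmin.of_le hcard)).ge
  · exact hxsδ.trans (not_le.mp hfx).le

end Sublevel

theorem card_min_opt_solves_card_constrained_general
    (n : ℕ) (X : Set (Fin n → ℝ)) (f : (Fin n → ℝ) → ℝ) (δ : ℝ)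
    (xs : Fin n → ℝ) (hxsδ : f xs ≤ δ)
    (hopt : ∀ x ∈ X, f x ≤ δ → card0 xs ≤ card0 x)
    (hsameval : ∀ x' ∈ X, f x' ≤ δ →
      (∀ x ∈ X, f x ≤ δ → card0 x' ≤ card0 x) → f x' = f xs) :
    ∀ x ∈ X, card0 x ≤ card0 xs → f xs ≤ f x := by
  have hmin : IsMinOn card0 {x ∈ X | f x ≤ δ} xs := fun x hx => hopt x hx.1 hx.2
  have hconstr := isMinOn_of_isMinOn_sublevel hxsδ hmin fun x' hx'X hx'δ hx'min =>
    hsameval x' hx'X hx'δ fun x hxX hxδ => hx'min ⟨hxX, hxδ⟩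
  exact fun x hxX hcard => hconstr ⟨hxX, hcard⟩

/-- Proposition 1.1(iii), positive part: if `xs` optimally solves the
cardinality-minimization problem `min ‖x‖₀ s.t. f(x) ≤ δ, x ∈ X`, and all optimal
solutions of this problem share the objective value `f(xs)`, then `xs` also solves
the cardinality-constrained problem `min f(x) s.t. ‖x‖₀ ≤ ‖xs‖₀, x ∈ X`. -/
theorem card_min_opt_solves_card_constrained
    (n : ℕ) (X : Set (Fin n → ℝ)) (f : (Fin n → ℝ) → ℝ) (δ : ℝ) (hδ : 0 ≤ δ)
    (xs : Fin n → ℝ) (hxsX : xs ∈ X) (hxsδ : f xs ≤ δ)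
    (hopt : ∀ x ∈ X, f x ≤ δ → card0 xs ≤ card0 x)
    (hsameval : ∀ x' ∈ X, f x' ≤ δ →
      (∀ x ∈ X, f x ≤ δ → card0 x' ≤ card0 x) → f x' = f xs) :
    ∀ x ∈ X, card0 x ≤ card0 xs → f xs ≤ f x :=
  card_min_opt_solves_card_constrained_general n X f δ xs hxsδ hopt hsameval
end

section
/- Let f : ℝ² → ℝ be given by f(x) = (x₁ − 2)². Then both x̂₁ = (1, 0)ᵀ and x̂₂ = (2, 0)ᵀ minimize ‖x‖₀ over {x ∈ ℝ² : f(x) ≤ 1} (each with optimal value ‖x‖₀ = 1), but x̂₁ does NOT minimize f over {x ∈ ℝ² : ‖x‖₀ ≤ 1}, since f(x̂₂) = 0 < 1 = f(x̂₁). Hence the equal-value assumption in Proposition 1.1(iii) cannot be dropped. -/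
lemma card0_pos_of_ne_zero {n : ℕ} {x : Fin n → ℝ} {i : Fin n} (hi : x i ≠ 0) :
    0 < card0 x :=
  (Set.ncard_pos (Set.toFinite _)).2 ⟨i, hi⟩

lemma card0_vec_zero_right {a : ℝ} (ha : a ≠ 0) : card0 ![a, 0] = 1 := by
  have hsupp : {i : Fin 2 | ![a, 0] i ≠ 0} = {0} := by
    ext i
    fin_cases i <;> simp [ha]
  rw [card0, hsupp, Set.ncard_singleton]

/-- Counterexample from the proof of Proposition 1.1(iii): with `f(x) = (x₁ - 2)²` on `ℝ²`,
both `x̂₁ = (1,0)ᵀ` and `x̂₂ = (2,0)ᵀ` minimize `‖x‖₀` over `{x : f(x) ≤ 1}` (each with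
value `1`), both are feasible, but `x̂₁` does not minimize `f` over `{x : ‖x‖₀ ≤ 1}`,
since `f(x̂₂) = 0 < 1 = f(x̂₁)`. -/
theorem equal_value_assumption_necessary :
    let f : (Fin 2 → ℝ) → ℝ := fun x => (x 0 - 2) ^ 2
    let xhat1 : Fin 2 → ℝ := ![1, 0]
    let xhat2 : Fin 2 → ℝ := ![2, 0]
    f xhat1 ≤ 1 ∧ f xhat2 ≤ 1 ∧
    card0 xhat1 = 1 ∧ card0 xhat2 = 1 ∧
    (∀ x : Fin 2 → ℝ, f x ≤ 1 → card0 xhat1 ≤ card0 x) ∧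
    (∀ x : Fin 2 → ℝ, f x ≤ 1 → card0 xhat2 ≤ card0 x) ∧
    card0 xhat2 ≤ 1 ∧ f xhat2 = 0 ∧ f xhat1 = 1 ∧
    ¬ (∀ x : Fin 2 → ℝ, card0 x ≤ 1 → f xhat1 ≤ f x) := by
  intro f xhat1 xhat2
  have hf1 : f xhat1 = 1 := by norm_num [f, xhat1]
  have hf2 : f xhat2 = 0 := by norm_num [f, xhat2]
  have hcard1 : card0 xhat1 = 1 := card0_vec_zero_right one_ne_zero
  have hcard2 : card0 xhat2 = 1 := card0_vec_zero_right two_ne_zero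
  have hcard_pos : ∀ x : Fin 2 → ℝ, f x ≤ 1 → 1 ≤ card0 x := by
    intro x hx
    refine card0_pos_of_ne_zero (i := 0) fun h0 => ?_
    simp only [f, h0] at hx
    norm_num at hx
  refine ⟨hf1.le, hf2.le.trans zero_le_one, hcard1, hcard2,
    fun x hx => hcard1 ▸ hcard_pos x hx, fun x hx => hcard2 ▸ hcard_pos x hx,
    hcard2.le, hf2, hf1, fun hmin => ?_⟩
  linarith [hmin xhat2 hcard2.le]
end

section
/- Let A ∈ ℝ^{m×n} and b ∈ ℝ^m with b ≠ 0, and suppose the system Ax = b has a solution. Call a set S ⊆ [n] a feasible support if there exists x ∈ ℝⁿ with supp(x) ⊆ S and Ax = b, and an infeasible support otherwise; an infeasible support B is maximal if no strict superset of B is infeasible. Then the minimum of ‖x‖₀ over {x ∈ ℝⁿ : Ax = b} equals the minimum of |T| over all sets T ⊆ [n] satisfying T ∩ ([n] \ B) ≠ ∅ for every maximal infeasible support B. That is, the cardinality-minimization problem min{‖x‖₀ : Ax = b} and the covering-type integer program min{|T| : T meets the complement of every maximal infeasible support} have the same optimal value. -/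
/-- `S` is a feasible support w.r.t. the linear system `Ax = b`: some solution of
`Ax = b` has its support contained in `S`. -/
def FeasSupp {m n : ℕ} (A : Matrix (Fin m) (Fin n) ℝ) (b : Fin m → ℝ)
    (S : Finset (Fin n)) : Prop :=
  ∃ x : Fin n → ℝ, (∀ i, x i ≠ 0 → i ∈ S) ∧ A.mulVec x = b

/-- `B` is a maximal infeasible support w.r.t. `Ax = b`. -/
def MaxInfeasSupp {m n : ℕ} (A : Matrix (Fin m) (Fin n) ℝ) (b : Fin m → ℝ)
    (B : Finset (Fin n)) : Prop :=
  ¬ FeasSupp A b B ∧ ∀ B' : Finset (Fin n), B ⊂ B' → FeasSupp A b B'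

/-!
Every infeasible support extends to a maximal one (supports form a finite poset), and feasibility
is upward closed, so a set is a feasible support exactly when it meets the complement of every
maximal infeasible support. The covering problem therefore minimizes `|T|` over feasible supports
`T`, and this agrees with `min ‖x‖₀`: the support of a solution `x` is a feasible support of size
`‖x‖₀`, and a feasible support `T` carries a solution with `‖x‖₀ ≤ |T|`.
-/

section Supports

variable {m n : ℕ} (A : Matrix (Fin m) (Fin n) ℝ) (b : Fin m → ℝ)

variable {A b} in
theorem FeasSupp.mono {S S' : Finset (Fin n)} (hS : FeasSupp A b S) (hSS' : S ⊆ S') :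
    FeasSupp A b S' :=
  let ⟨x, hx, hAx⟩ := hS
  ⟨x, fun i hi => hSS' (hx i hi), hAx⟩

theorem exists_superset_maxInfeasSupp {T : Finset (Fin n)} (hT : ¬ FeasSupp A b T) :
    ∃ B, T ⊆ B ∧ MaxInfeasSupp A b B := by
  obtain ⟨B, hTB, hB⟩ := Finite.exists_le_maximal (p := fun B => ¬ FeasSupp A b B) hT
  refine ⟨B, hTB, hB.prop, fun B' hBB' => ?_⟩
  by_contra hB'
  exact hBB'.not_subset (hB.le_of_ge hB' hBB'.subset)

theorem feasSupp_iff_forall_maxInfeasSupp (T : Finset (Fin n)) :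
    FeasSupp A b T ↔ ∀ B, MaxInfeasSupp A b B → (T ∩ Bᶜ).Nonempty := by
  constructor
  · intro hT B hB
    by_contra hTB
    rw [Finset.not_nonempty_iff_eq_empty, ← Finset.sdiff_eq_inter_compl,
      Finset.sdiff_eq_empty_iff_subset] at hTB
    exact hB.1 (hT.mono hTB)
  · intro hT
    by_contra hinfeas
    obtain ⟨B, hTB, hB⟩ := exists_superset_maxInfeasSupp A b hinfeas
    obtain ⟨i, hi⟩ := hT B hB
    rw [Finset.mem_inter, Finset.mem_compl] at hi
    exact hi.2 (hTB hi.1)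

end Supports

theorem card0_eq_card_filter {n : ℕ} (x : Fin n → ℝ) :
    card0 x = (Finset.univ.filter fun i => x i ≠ 0).card := by
  rw [card0, ← Set.ncard_coe_finset, Finset.coe_filter_univ]

theorem card0_le_card {n : ℕ} {x : Fin n → ℝ} {S : Finset (Fin n)}
    (hx : ∀ i, x i ≠ 0 → i ∈ S) : card0 x ≤ S.card := by
  rw [card0_eq_card_filter]
  exact Finset.card_le_card fun i hi => hx i (Finset.mem_filter.mp hi).2

theorem card_min_eq_covering_min_general
    (m n : ℕ) (A : Matrix (Fin m) (Fin n) ℝ) (b : Fin m → ℝ) :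
    sInf {k : ℕ | ∃ x : Fin n → ℝ, A.mulVec x = b ∧ card0 x = k} =
      sInf {k : ℕ | ∃ T : Finset (Fin n),
        (∀ B : Finset (Fin n), MaxInfeasSupp A b B → (T ∩ Bᶜ).Nonempty) ∧ T.card = k} := by
  simp_rw [← feasSupp_iff_forall_maxInfeasSupp]
  apply csInf_eq_csInf_of_forall_exists_le
  · rintro _ ⟨x, hAx, rfl⟩
    refine ⟨_, ⟨_, ⟨x, fun i hi => ?_, hAx⟩, rfl⟩, (card0_eq_card_filter x).ge⟩
    simpa using hi
  · rintro _ ⟨T, ⟨x, hxT, hAx⟩, rfl⟩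
    exact ⟨_, ⟨x, hAx, rfl⟩, card0_le_card hxT⟩

/-- The covering-IP reformulation (eq. (3.4)): the optimal value of the cardinality
minimization problem `min ‖x‖₀ s.t. Ax = b` equals the optimal value of the covering
problem `min |T| s.t. T ∩ Bᶜ ≠ ∅ for every maximal infeasible support B`. -/
theorem card_min_eq_covering_min
    (m n : ℕ) (A : Matrix (Fin m) (Fin n) ℝ) (b : Fin m → ℝ)
    (hb : b ≠ 0) (hfeas : ∃ x : Fin n → ℝ, A.mulVec x = b) :
    sInf {k : ℕ | ∃ x : Fin n → ℝ, A.mulVec x = b ∧ card0 x = k} =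
      sInf {k : ℕ | ∃ T : Finset (Fin n),
        (∀ B : Finset (Fin n), MaxInfeasSupp A b B → (T ∩ Bᶜ).Nonempty) ∧ T.card = k} :=
  card_min_eq_covering_min_general m n A b
end

section
/- Let A ∈ ℝ^{m×n} with rank(A) = m < n, and let D ∈ ℝ^{(n−m)×n} be a matrix whose nullspace {x ∈ ℝⁿ : Dx = 0} equals the column space of Aᵀ (i.e., the columns of Aᵀ form a basis of the nullspace of D). Then: (a) the optimal values of the two problems min{‖Aᵀv‖₀ : v ∈ ℝ^m, v ≠ 0} and min{‖x‖₀ : Dx = 0, x ≠ 0} coincide; and (b) if x̄ is an optimal solution of min{‖x‖₀ : Dx = 0, x ≠ 0}, then v̄ = (AAᵀ)⁻¹A x̄ is well defined (AAᵀ is invertible since rank(A) = m), satisfies Aᵀv̄ = x̄, and is an optimal solution of min{‖Aᵀv‖₀ : v ≠ 0}. -/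
/-! Over an ordered field `rank (A Aᵀ) = rank A = m`, so `A Aᵀ` is invertible and `(A Aᵀ)⁻¹ A` is a
left inverse of `Aᵀ`. Hence `v ↦ Aᵀ v` is a bijection from the nonzero `v` onto the nonzero points
of `ker D = range Aᵀ`, and the two problems have the same feasible values of `‖·‖₀`. -/

open Matrix

namespace Matrix

variable {m n R : Type*} [Fintype m] [DecidableEq m]

theorem isUnit_of_rank_eq_card [Field R] {M : Matrix m m R} (hM : M.rank = Fintype.card m) :
    IsUnit M := by
  have hrange : LinearMap.range M.mulVecLin = ⊤ :=
    Submodule.eq_top_of_finrank_eq (by rw [← rank, hM, Module.finrank_fintype_fun_eq_card])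
  exact mulVec_surjective_iff_isUnit.mp (LinearMap.range_eq_top.mp hrange)

theorem isUnit_det_mul_transpose_of_rank_eq_card [Fintype n] [Field R] [LinearOrder R]
    [IsStrictOrderedRing R]
    {A : Matrix m n R} (hA : A.rank = Fintype.card m) : IsUnit (A * Aᵀ).det :=
  (isUnit_iff_isUnit_det _).mp (isUnit_of_rank_eq_card (by rw [rank_self_mul_transpose, hA]))

theorem nonsing_inv_mul_mulVec_mulVec [Fintype n] [CommRing R] {A : Matrix m n R}
    {B : Matrix n m R} (h : IsUnit (A * B).det) (v : m → R) :
    (A * B)⁻¹ *ᵥ (A *ᵥ (B *ᵥ v)) = v := by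
  rw [mulVec_mulVec, mulVec_mulVec, Matrix.mul_assoc, nonsing_inv_mul _ h, one_mulVec]

theorem mulVec_injective_of_isUnit_det_mul [Fintype n] [CommRing R] {A : Matrix m n R}
    {B : Matrix n m R} (h : IsUnit (A * B).det) : Function.Injective B.mulVec :=
  Function.LeftInverse.injective (g := fun x => (A * B)⁻¹ *ᵥ (A *ᵥ x))
    (nonsing_inv_mul_mulVec_mulVec h)

end Matrix

theorem cospark_as_spark_general
    (m n : ℕ) (A : Matrix (Fin m) (Fin n) ℝ) (D : Matrix (Fin (n - m)) (Fin n) ℝ)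
    (hrank : A.rank = m)
    (hD : {x : Fin n → ℝ | D.mulVec x = 0} = {x : Fin n → ℝ | ∃ v : Fin m → ℝ, Aᵀ.mulVec v = x}) :
    (sInf {k : ℕ | ∃ v : Fin m → ℝ, v ≠ 0 ∧ card0 (Aᵀ.mulVec v) = k} =
      sInf {k : ℕ | ∃ x : Fin n → ℝ, x ≠ 0 ∧ D.mulVec x = 0 ∧ card0 x = k}) ∧
    (∀ xbar : Fin n → ℝ, xbar ≠ 0 → D.mulVec xbar = 0 →
      (∀ x : Fin n → ℝ, x ≠ 0 → D.mulVec x = 0 → card0 xbar ≤ card0 x) →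
      IsUnit (A * Aᵀ).det ∧
      Aᵀ.mulVec ((A * Aᵀ)⁻¹.mulVec (A.mulVec xbar)) = xbar ∧
      (A * Aᵀ)⁻¹.mulVec (A.mulVec xbar) ≠ 0 ∧
      (∀ v : Fin m → ℝ, v ≠ 0 →
        card0 (Aᵀ.mulVec ((A * Aᵀ)⁻¹.mulVec (A.mulVec xbar))) ≤ card0 (Aᵀ.mulVec v))) := by
  have hunit : IsUnit (A * Aᵀ).det :=
    isUnit_det_mul_transpose_of_rank_eq_card (by rw [hrank, Fintype.card_fin])
  have hinj : Function.Injective Aᵀ.mulVec := mulVec_injective_of_isUnit_det_mul hunit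
  have hker (x : Fin n → ℝ) : D *ᵥ x = 0 ↔ ∃ v, Aᵀ *ᵥ v = x := Set.ext_iff.mp hD x
  have hne (v : Fin m → ℝ) : Aᵀ *ᵥ v ≠ 0 ↔ v ≠ 0 := hinj.ne_iff' (mulVec_zero _)
  refine ⟨congrArg sInf (Set.ext fun k => ⟨?_, ?_⟩), ?_⟩
  · rintro ⟨v, hv, rfl⟩
    exact ⟨Aᵀ *ᵥ v, (hne v).mpr hv, (hker _).mpr ⟨v, rfl⟩, rfl⟩
  · rintro ⟨x, hx, hDx, rfl⟩
    obtain ⟨v, rfl⟩ := (hker x).mp hDx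
    exact ⟨v, (hne v).mp hx, rfl⟩
  · intro xbar hxbar hDxbar hopt
    obtain ⟨vbar, rfl⟩ := (hker xbar).mp hDxbar
    rw [nonsing_inv_mul_mulVec_mulVec hunit]
    exact ⟨hunit, rfl, (hne vbar).mp hxbar,
      fun v hv => hopt _ ((hne v).mpr hv) ((hker _).mpr ⟨v, rfl⟩)⟩

/-- Proposition 3.2: for `A ∈ ℝ^{m×n}` with `rank(A) = m < n` and `D ∈ ℝ^{(n-m)×n}` whose
nullspace is the column space of `Aᵀ`, the cospark problem `min{‖Aᵀv‖₀ : v ≠ 0}` and the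
spark problem `min{‖x‖₀ : Dx = 0, x ≠ 0}` have the same optimal value; moreover, from any
optimal solution `x̄` of the spark problem, `v̄ = (AAᵀ)⁻¹ A x̄` is well defined
(`AAᵀ` is invertible), satisfies `Aᵀ v̄ = x̄`, and optimally solves the cospark problem. -/
theorem cospark_as_spark
    (m n : ℕ) (A : Matrix (Fin m) (Fin n) ℝ) (D : Matrix (Fin (n - m)) (Fin n) ℝ)
    (hrank : A.rank = m) (hmn : m < n)
    (hD : {x : Fin n → ℝ | D.mulVec x = 0} = {x : Fin n → ℝ | ∃ v : Fin m → ℝ, Aᵀ.mulVec v = x}) :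
    (sInf {k : ℕ | ∃ v : Fin m → ℝ, v ≠ 0 ∧ card0 (Aᵀ.mulVec v) = k} =
      sInf {k : ℕ | ∃ x : Fin n → ℝ, x ≠ 0 ∧ D.mulVec x = 0 ∧ card0 x = k}) ∧
    (∀ xbar : Fin n → ℝ, xbar ≠ 0 → D.mulVec xbar = 0 →
      (∀ x : Fin n → ℝ, x ≠ 0 → D.mulVec x = 0 → card0 xbar ≤ card0 x) →
      IsUnit (A * Aᵀ).det ∧
      Aᵀ.mulVec ((A * Aᵀ)⁻¹.mulVec (A.mulVec xbar)) = xbar ∧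
      (A * Aᵀ)⁻¹.mulVec (A.mulVec xbar) ≠ 0 ∧
      (∀ v : Fin m → ℝ, v ≠ 0 →
        card0 (Aᵀ.mulVec ((A * Aᵀ)⁻¹.mulVec (A.mulVec xbar))) ≤ card0 (Aᵀ.mulVec v))) :=
  cospark_as_spark_general m n A D hrank hD
end

section
/- Let A ∈ ℝ^{m×n}, let x̂ ∈ ℝⁿ, and set b = Ax̂ and S = supp(x̂). Then x̂ is the unique optimal solution of the basis pursuit problem min{‖x‖₁ : Ax = b} if and only if the columns {A_j : j ∈ S} are linearly independent (equivalently, rank(A_S) = ‖x̂‖₀) and there exists w ∈ ℝ^m such that (Aᵀw)_j = sign(x̂_j) for all j ∈ S and |(Aᵀw)_j| < 1 for all j ∉ S. -/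
open Matrix

/-!
Write `S = supp x̂` and let `φ(h) = ∑_{j ∈ S} sign(x̂ⱼ) hⱼ + ∑_{j ∉ S} |hⱼ|` be the one-sided
directional derivative of `‖·‖₁` at `x̂`. Since `‖·‖₁` is piecewise linear,
`‖x̂ + t h‖₁ = ‖x̂‖₁ + t φ(h)` for small `t > 0`, while `‖x̂ + h‖₁ ≥ ‖x̂‖₁ + φ(h)` always; so `x̂`
is the unique minimiser iff `φ > 0` on `ker A \ {0}`.

Given a certificate `y = Aᵀw`, orthogonality of `y` to `ker A` turns `φ(h)` into
`∑_{j ∉ S} (|hⱼ| - yⱼ hⱼ)`, which is positive unless `h` is supported on `S`; linear independence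
of the columns `A_S` rules that out. Conversely, `φ(-h) = -φ(h)` for `h` supported on `S` gives
linear independence. For the certificate, compactness of the unit sphere of `ker A` upgrades
`φ > 0` to `-⟨sign x̂, h⟩ ≤ ρ ∑_{j ∉ S} |hⱼ|` on `ker A` for some `ρ < 1`. Hahn–Banach extends
`-⟨sign x̂, ·⟩` from `ker A` to some `⟨u, ·⟩` with `u = 0` on `S` and `|uⱼ| ≤ ρ` off `S`; then
`sign x̂ + u` is orthogonal to `ker A`, hence equals `Aᵀw` for some `w`.
-/

open Filter Topology

lemma Real.sign_mul_self (a : ℝ) : Real.sign a * a = |a| := by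
  rcases lt_trichotomy a 0 with h | rfl | h
  · rw [Real.sign_of_neg h, abs_of_neg h]; ring
  · simp
  · rw [Real.sign_of_pos h, abs_of_pos h]; ring

lemma Real.abs_sign_le_one (a : ℝ) : |Real.sign a| ≤ 1 := by
  rcases Real.sign_apply_eq a with h | h | h <;> simp [h]

noncomputable def absDirDeriv (a b : ℝ) : ℝ := if a = 0 then |b| else Real.sign a * b

lemma absDirDeriv_eq_sign_mul_add (a b : ℝ) :
    absDirDeriv a b = Real.sign a * b + if a = 0 then |b| else 0 := by
  unfold absDirDeriv
  split_ifs with ha <;> simp [ha]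

lemma absDirDeriv_mul {t : ℝ} (ht : 0 ≤ t) (a b : ℝ) :
    absDirDeriv a (t * b) = t * absDirDeriv a b := by
  unfold absDirDeriv
  split_ifs
  · rw [abs_mul, abs_of_nonneg ht]
  · ring

lemma continuous_absDirDeriv (a : ℝ) : Continuous (absDirDeriv a) := by
  unfold absDirDeriv
  split_ifs
  · exact continuous_abs
  · exact continuous_const_mul _

lemma abs_add_absDirDeriv_le (a b : ℝ) : |a| + absDirDeriv a b ≤ |a + b| := by
  unfold absDirDeriv
  split_ifs with ha
  · simp [ha]
  · calc |a| + Real.sign a * b = Real.sign a * (a + b) := by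
          rw [← Real.sign_mul_self]; ring
      _ ≤ |Real.sign a| * |a + b| := by rw [← abs_mul]; exact le_abs_self _
      _ ≤ |a + b| := mul_le_of_le_one_left (abs_nonneg _) (Real.abs_sign_le_one a)

lemma eventually_abs_add_mul_eq (a b : ℝ) :
    ∀ᶠ t in 𝓝[>] 0, |a + t * b| = |a| + t * absDirDeriv a b := by
  unfold absDirDeriv
  split_ifs with ha
  · filter_upwards [self_mem_nhdsWithin] with t (ht : 0 < t)
    rw [ha, zero_add, abs_zero, zero_add, abs_mul, abs_of_pos ht]
  · have hsmall : ∀ᶠ t in 𝓝 (0 : ℝ), t * b ∈ Set.Ioo (-|a|) |a| := by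
      have : Tendsto (fun t : ℝ => t * b) (𝓝 0) (𝓝 0) := by
        simpa using (continuous_mul_const b).tendsto 0
      exact this.eventually (Ioo_mem_nhds (by simpa using ha) (by simpa using ha))
    filter_upwards [nhdsWithin_le_nhds hsmall] with t ⟨hlo, hhi⟩
    rcases lt_or_gt_of_ne ha with ha | ha
    · rw [abs_of_neg ha] at hlo hhi ⊢
      rw [Real.sign_of_neg ha, abs_of_neg (by linarith)]; ring
    · rw [abs_of_pos ha] at hlo hhi ⊢
      rw [Real.sign_of_pos ha, abs_of_pos (by linarith)]; ring

section L1

variable {ι κ : Type*} [Fintype ι]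

noncomputable def l1DirDeriv (x h : ι → ℝ) : ℝ := ∑ j, absDirDeriv (x j) (h j)

lemma l1DirDeriv_eq_sign_dotProduct_add (x h : ι → ℝ) :
    l1DirDeriv x h = (Real.sign ∘ x) ⬝ᵥ h + ∑ j, if x j = 0 then |h j| else 0 := by
  simp only [l1DirDeriv, absDirDeriv_eq_sign_mul_add, Finset.sum_add_distrib, dotProduct,
    Function.comp_apply]

lemma sum_abs_add_l1DirDeriv_le (x h : ι → ℝ) :
    ∑ j, |x j| + l1DirDeriv x h ≤ ∑ j, |x j + h j| := by
  rw [l1DirDeriv, ← Finset.sum_add_distrib]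
  exact Finset.sum_le_sum fun j _ => abs_add_absDirDeriv_le _ _

lemma exists_pos_sum_abs_add_mul_eq (x h : ι → ℝ) :
    ∃ t > 0, ∑ j, |x j + t * h j| = ∑ j, |x j| + t * l1DirDeriv x h := by
  obtain ⟨t, ht, ht0⟩ := ((eventually_all.2 fun j => eventually_abs_add_mul_eq (x j) (h j)).and
    self_mem_nhdsWithin).exists
  refine ⟨t, ht0, ?_⟩
  rw [Finset.sum_congr rfl fun j _ => ht j, Finset.sum_add_distrib, l1DirDeriv, Finset.mul_sum]

theorem forall_sum_abs_lt_iff_l1DirDeriv_pos (A : Matrix κ ι ℝ) (xhat : ι → ℝ) :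
    (∀ x, A *ᵥ x = A *ᵥ xhat → x ≠ xhat → ∑ i, |xhat i| < ∑ i, |x i|) ↔
      ∀ h, A *ᵥ h = 0 → h ≠ 0 → 0 < l1DirDeriv xhat h := by
  constructor
  · intro hmin h hker hne
    obtain ⟨t, ht, heq⟩ := exists_pos_sum_abs_add_mul_eq xhat h
    have hlt := hmin (xhat + t • h) (by rw [mulVec_add, mulVec_smul, hker, smul_zero, add_zero])
      (by simpa [ht.ne'] using hne)
    simp only [Pi.add_apply, Pi.smul_apply, smul_eq_mul, heq] at hlt
    exact pos_of_mul_pos_right (by linarith) ht.le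
  · intro hpos x hx hne
    have hle := sum_abs_add_l1DirDeriv_le xhat (x - xhat)
    simp only [Pi.sub_apply, add_sub_cancel] at hle
    linarith [hpos (x - xhat) (by rw [mulVec_sub, hx, sub_self]) (sub_ne_zero.2 hne)]

end L1

theorem linearIndependent_cols_subtype_iff {ι κ R : Type*} [Fintype ι] [CommRing R]
    (A : Matrix κ ι R) (p : ι → Prop) [DecidablePred p] :
    LinearIndependent R (fun j : {j // p j} => fun i => A i j) ↔
      ∀ h : ι → R, A *ᵥ h = 0 → (∀ j, ¬ p j → h j = 0) → h = 0 := by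
  have hsum_eq : ∀ h : ι → R, (∀ j, ¬ p j → h j = 0) →
      ∑ j : {j // p j}, h j • (fun i => A i j) = A *ᵥ h := by
    intro h hh
    ext i
    simp only [Finset.sum_apply, Pi.smul_apply, smul_eq_mul, mulVec, dotProduct]
    rw [← Fintype.sum_subtype_add_sum_subtype p,
      Fintype.sum_eq_zero (fun j : {j // ¬ p j} => A i j * h j) fun j => by simp [hh j j.2],
      add_zero]
    simp_rw [mul_comm]
  rw [Fintype.linearIndependent_iff]
  constructor
  · intro hli h hker hh
    ext j
    by_cases hj : p j
    · exact hli (fun j => h j) (by rw [hsum_eq h hh, hker]) ⟨j, hj⟩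
    · exact hh j hj
  · intro hker g hg j
    set h : ι → R := fun j => if hj : p j then g ⟨j, hj⟩ else 0
    have hgh : ∀ j : {j // p j}, h j = g j := fun j => dif_pos j.2
    have hh : ∀ j, ¬ p j → h j = 0 := fun j hj => dif_neg hj
    have hzero := hker h (by rw [← hsum_eq h hh]; simpa only [hgh] using hg) hh
    rw [← hgh, hzero, Pi.zero_apply]

theorem exists_pos_mul_norm_le_of_pos {E : Type*} [NormedAddCommGroup E] [NormedSpace ℝ E]
    [FiniteDimensional ℝ E] {f : E → ℝ} (hf : Continuous f)
    (hhom : ∀ t : ℝ, 0 < t → ∀ x, f (t • x) = t * f x) (hpos : ∀ x ≠ 0, 0 < f x) :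
    ∃ δ > 0, ∀ x, δ * ‖x‖ ≤ f x := by
  have hf0 : f 0 = 0 := by
    have := hhom 2 two_pos 0
    rw [smul_zero] at this
    linarith
  rcases subsingleton_or_nontrivial E with hE | hE
  · exact ⟨1, one_pos, fun x => by simp [Subsingleton.elim x 0, hf0]⟩
  obtain ⟨x₀, hx₀, hmin⟩ := (isCompact_sphere (0 : E) 1).exists_isMinOn
    (NormedSpace.sphere_nonempty.2 zero_le_one) hf.continuousOn
  have hx₀ : ‖x₀‖ = 1 := by simpa using hx₀
  refine ⟨f x₀, hpos x₀ (by rintro rfl; simp at hx₀), fun x => ?_⟩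
  rcases eq_or_ne x 0 with rfl | hx
  · simp [hf0]
  have hx' : 0 < ‖x‖ := norm_pos_iff.2 hx
  have hu : ‖x‖⁻¹ • x ∈ Metric.sphere (0 : E) 1 := by simp [norm_smul, hx'.ne']
  calc f x₀ * ‖x‖ ≤ f (‖x‖⁻¹ • x) * ‖x‖ := mul_le_mul_of_nonneg_right (hmin hu) hx'.le
    _ = f x := by rw [hhom _ (inv_pos.2 hx'), mul_right_comm, inv_mul_cancel₀ hx'.ne', one_mul]

theorem exists_abs_le_and_dotProduct_eq {ι : Type*} [Fintype ι] (K : Submodule ℝ (ι → ℝ))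
    (v c : ι → ℝ) (hc : 0 ≤ c) (hv : ∀ h ∈ K, v ⬝ᵥ h ≤ ∑ j, c j * |h j|) :
    ∃ u : ι → ℝ, (∀ j, |u j| ≤ c j) ∧ ∀ h ∈ K, v ⬝ᵥ h = u ⬝ᵥ h := by
  classical
  set N : (ι → ℝ) → ℝ := fun h => ∑ j, c j * |h j|
  have hN_hom : ∀ t : ℝ, 0 < t → ∀ h, N (t • h) = t * N h := fun t ht h => by
    simp only [N, Finset.mul_sum, Pi.smul_apply, smul_eq_mul, abs_mul, abs_of_pos ht]
    exact Finset.sum_congr rfl fun j _ => by ring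
  have hN_add : ∀ h h', N (h + h') ≤ N h + N h' := fun h h' => by
    simp only [N, ← Finset.sum_add_distrib, ← mul_add, Pi.add_apply]
    exact Finset.sum_le_sum fun j _ => mul_le_mul_of_nonneg_left (abs_add_le _ _) (hc j)
  have hN_single : ∀ j t, N (Pi.single j t) = c j * |t| := fun j t => by
    simp only [N]
    rw [Finset.sum_eq_single j (fun i _ hi => by simp [hi]) (by simp)]
    simp
  obtain ⟨g, hgK, hgN⟩ := exists_extension_of_le_sublinear
    ((dotProductEquiv ℝ ι v).toPMap K) N hN_hom hN_add fun h => hv h h.2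
  refine ⟨(dotProductEquiv ℝ ι).symm g, fun j => abs_le.2 ⟨?_, ?_⟩, fun h hh => ?_⟩
  · have hneg := hgN (Pi.single j (-1))
    rw [hN_single, Pi.single_neg, map_neg] at hneg
    simp only [abs_neg, abs_one, mul_one] at hneg
    simp only [dotProductEquiv_symm_apply, LinearMap.coe_single]
    linarith
  · have hpos := hgN (Pi.single j 1)
    rw [hN_single] at hpos
    simpa using hpos
  · have hgh : g h = v ⬝ᵥ h := hgK ⟨h, hh⟩
    rw [← hgh, ← dotProductEquiv_apply_apply, LinearEquiv.apply_symm_apply]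

theorem exists_transpose_mulVec_eq {ι κ K : Type*} [Fintype ι] [Fintype κ] [Field K]
    (A : Matrix κ ι K) (y : ι → K) (hy : ∀ h, A *ᵥ h = 0 → y ⬝ᵥ h = 0) :
    ∃ w, Aᵀ *ᵥ w = y := by
  classical
  obtain ⟨φ, hφ⟩ : dotProductEquiv K ι y ∈ LinearMap.range A.mulVecLin.dualMap := by
    rw [LinearMap.range_dualMap_eq_dualAnnihilator_ker, Submodule.mem_dualAnnihilator]
    exact hy
  refine ⟨(dotProductEquiv K κ).symm φ, (dotProductEquiv K ι).injective (LinearMap.ext fun h => ?_)⟩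
  rw [← hφ, LinearMap.dualMap_apply, dotProductEquiv_apply_apply, mulVec_transpose,
    ← dotProduct_mulVec, ← dotProductEquiv_apply_apply, LinearEquiv.apply_symm_apply,
    mulVecLin_apply]

section SourceCondition

variable {ι κ : Type*} [Fintype ι] {A : Matrix κ ι ℝ} {xhat : ι → ℝ}

theorem l1DirDeriv_pos_of_certificate [Fintype κ]
    (hli : LinearIndependent ℝ (fun j : {j // xhat j ≠ 0} => fun i => A i j.1)) {w : κ → ℝ}
    (hw_supp : ∀ j, xhat j ≠ 0 → (Aᵀ *ᵥ w) j = Real.sign (xhat j))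
    (hw_off : ∀ j, xhat j = 0 → |(Aᵀ *ᵥ w) j| < 1) {h : ι → ℝ} (hker : A *ᵥ h = 0)
    (hne : h ≠ 0) : 0 < l1DirDeriv xhat h := by
  have horth : (Aᵀ *ᵥ w) ⬝ᵥ h = 0 := by
    rw [mulVec_transpose, ← dotProduct_mulVec, hker, dotProduct_zero]
  set y := Aᵀ *ᵥ w
  obtain ⟨j₀, hj₀, hhj₀⟩ : ∃ j, xhat j = 0 ∧ h j ≠ 0 := by
    by_contra! hcon
    exact hne ((linearIndependent_cols_subtype_iff A _).1 hli h hker fun j hj =>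
      hcon j (not_not.1 hj))
  have hterm : ∀ j, absDirDeriv (xhat j) (h j) - y j * h j =
      if xhat j = 0 then |h j| - y j * h j else 0 := fun j => by
    unfold absDirDeriv
    split_ifs with hj
    · rfl
    · rw [hw_supp j hj, sub_self]
  have hmul_le : ∀ j, y j * h j ≤ |y j| * |h j| := fun j => by
    rw [← abs_mul]; exact le_abs_self _
  have hsplit : l1DirDeriv xhat h = ∑ j, if xhat j = 0 then |h j| - y j * h j else 0 := by
    calc l1DirDeriv xhat h = l1DirDeriv xhat h - y ⬝ᵥ h := by rw [horth, sub_zero]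
      _ = ∑ j, (absDirDeriv (xhat j) (h j) - y j * h j) := by
        rw [l1DirDeriv, dotProduct, ← Finset.sum_sub_distrib]
      _ = _ := Finset.sum_congr rfl fun j _ => hterm j
  rw [hsplit]
  refine Finset.sum_pos' (fun j _ => ?_) ⟨j₀, Finset.mem_univ _, ?_⟩
  · split_ifs with hj
    · nlinarith [hmul_le j, hw_off j hj, abs_nonneg (h j)]
    · exact le_rfl
  · rw [if_pos hj₀]
    nlinarith [hmul_le j₀, hw_off j₀ hj₀, abs_pos.2 hhj₀]

theorem linearIndependent_of_l1DirDeriv_pos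
    (hpos : ∀ h, A *ᵥ h = 0 → h ≠ 0 → 0 < l1DirDeriv xhat h) :
    LinearIndependent ℝ (fun j : {j // xhat j ≠ 0} => fun i => A i j.1) := by
  refine (linearIndependent_cols_subtype_iff A _).2 fun h hker hsupp => ?_
  by_contra hne
  have hneg : l1DirDeriv xhat (-h) = -l1DirDeriv xhat h := by
    rw [l1DirDeriv, l1DirDeriv, ← Finset.sum_neg_distrib]
    refine Finset.sum_congr rfl fun j _ => ?_
    by_cases hj : xhat j = 0
    · simp [absDirDeriv, hj, hsupp j (not_not.2 hj)]
    · simp [absDirDeriv, hj]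
  linarith [hpos h hker hne, hpos (-h) (by rw [mulVec_neg, hker, neg_zero]) (neg_ne_zero.2 hne)]

theorem exists_lt_one_neg_sign_dotProduct_le
    (hpos : ∀ h, A *ᵥ h = 0 → h ≠ 0 → 0 < l1DirDeriv xhat h) :
    ∃ ρ, 0 ≤ ρ ∧ ρ < 1 ∧ ∀ h, A *ᵥ h = 0 →
      -((Real.sign ∘ xhat) ⬝ᵥ h) ≤ ρ * ∑ j, if xhat j = 0 then |h j| else 0 := by
  obtain ⟨δ, hδ, hδle⟩ := exists_pos_mul_norm_le_of_pos (E := LinearMap.ker A.mulVecLin)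
    (f := fun h => l1DirDeriv xhat h)
    (continuous_finsetSum _ fun j _ =>
      (continuous_absDirDeriv _).comp ((continuous_apply j).comp continuous_subtype_val))
    (fun t ht h => by
      simp only [Submodule.coe_smul, l1DirDeriv, Pi.smul_apply, smul_eq_mul,
        absDirDeriv_mul ht.le, Finset.mul_sum])
    (fun h hh => hpos h h.2 (by simpa using hh))
  set C : ℝ := (Fintype.card ι : ℝ)
  set ε := min 1 (δ / (C + 1))
  have hε : 0 < ε := lt_min one_pos (by positivity)
  refine ⟨1 - ε, by linarith [min_le_left 1 (δ / (C + 1))], by linarith, fun h hker => ?_⟩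
  set q := ∑ j, if xhat j = 0 then |h j| else 0
  have hq0 : 0 ≤ q := Finset.sum_nonneg fun j _ => by split_ifs <;> simp
  have hqC : q ≤ C * ‖h‖ := by
    calc q ≤ ∑ _j : ι, ‖h‖ := Finset.sum_le_sum fun j _ => by
          split_ifs
          · exact norm_le_pi_norm h j
          · exact norm_nonneg h
      _ = C * ‖h‖ := by simp [C]
  have hεq : ε * q ≤ δ * ‖h‖ := by
    calc ε * q ≤ δ / (C + 1) * (C * ‖h‖) :=
          mul_le_mul (min_le_right _ _) hqC hq0 (by positivity)
      _ ≤ δ * ‖h‖ := by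
        rw [div_mul_eq_mul_div, div_le_iff₀ (by positivity)]
        linarith [mul_nonneg hδ.le (norm_nonneg h)]
  have hφ : δ * ‖h‖ ≤ l1DirDeriv xhat h := hδle ⟨h, hker⟩
  rw [l1DirDeriv_eq_sign_dotProduct_add] at hφ
  linarith

theorem exists_certificate_of_l1DirDeriv_pos [Fintype κ]
    (hpos : ∀ h, A *ᵥ h = 0 → h ≠ 0 → 0 < l1DirDeriv xhat h) :
    ∃ w : κ → ℝ, (∀ j, xhat j ≠ 0 → (Aᵀ *ᵥ w) j = Real.sign (xhat j)) ∧
      ∀ j, xhat j = 0 → |(Aᵀ *ᵥ w) j| < 1 := by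
  obtain ⟨ρ, hρ0, hρ1, hρ⟩ := exists_lt_one_neg_sign_dotProduct_le hpos
  set c : ι → ℝ := fun j => if xhat j = 0 then ρ else 0
  obtain ⟨u, hu, hsign⟩ := exists_abs_le_and_dotProduct_eq (LinearMap.ker A.mulVecLin)
    (-(Real.sign ∘ xhat)) c (fun j => by simp only [c]; split_ifs <;> simp [hρ0])
    (fun h hker => by
      rw [neg_dotProduct]
      convert hρ h hker using 1
      rw [Finset.mul_sum]
      exact Finset.sum_congr rfl fun j _ => by simp only [c]; split_ifs <;> simp)
  obtain ⟨w, hw⟩ := exists_transpose_mulVec_eq A (Real.sign ∘ xhat + u) fun h hker => by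
    rw [add_dotProduct, ← hsign h hker, neg_dotProduct, add_neg_cancel]
  refine ⟨w, fun j hj => ?_, fun j hj => ?_⟩
  · have hu0 : u j = 0 := abs_nonpos_iff.1 (by simpa [c, hj] using hu j)
    simp [hw, hu0]
  · have huj := hu j
    simp only [c, if_pos hj] at huj
    simpa [hw, hj] using huj.trans_lt hρ1

end SourceCondition

/-- The strong source condition: `x̂` is the unique optimal solution of the basis pursuit
problem `min{‖x‖₁ : Ax = Ax̂}` if and only if the columns of `A` indexed by `supp(x̂)` are
linearly independent and there is `w` with `(Aᵀw)ⱼ = sign(x̂ⱼ)` on the support and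
`|(Aᵀw)ⱼ| < 1` off the support. -/
theorem strong_source_condition
    (m n : ℕ) (A : Matrix (Fin m) (Fin n) ℝ) (xhat : Fin n → ℝ) :
    (∀ x : Fin n → ℝ, A.mulVec x = A.mulVec xhat → x ≠ xhat →
        (∑ i, |xhat i|) < ∑ i, |x i|) ↔
      (LinearIndependent ℝ (fun j : {j : Fin n // xhat j ≠ 0} => fun i => A i j.1) ∧
        ∃ w : Fin m → ℝ,
          (∀ j : Fin n, xhat j ≠ 0 → Aᵀ.mulVec w j = Real.sign (xhat j)) ∧
          (∀ j : Fin n, xhat j = 0 → |Aᵀ.mulVec w j| < 1)) := by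
  rw [forall_sum_abs_lt_iff_l1DirDeriv_pos]
  refine ⟨fun hpos => ⟨linearIndependent_of_l1DirDeriv_pos hpos,
    exists_certificate_of_l1DirDeriv_pos hpos⟩, ?_⟩
  rintro ⟨hli, w, hw_supp, hw_off⟩ h hker hne
  exact l1DirDeriv_pos_of_certificate hli hw_supp hw_off hker hne
end

section
/- For every x ∈ ℝⁿ, the number of nonzero entries of x satisfies ‖x‖₀ = min{ ‖u‖₁ : u ∈ ℝⁿ, ‖x‖₁ = xᵀu, −1 ≤ uᵢ ≤ 1 for all i }. That is, the minimum of the ℓ₁-norm of u over all vectors u in the box [−1, 1]ⁿ with xᵀu = ‖x‖₁ is attained and equals ‖x‖₀. -/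
open Finset

section OrderedRing

variable {α : Type*} [Ring α] [LinearOrder α] [IsStrictOrderedRing α]

theorem abs_sign_eq_ite (a : α) : |(SignType.sign a : α)| = if a ≠ 0 then 1 else 0 := by
  rcases lt_trichotomy a 0 with h | rfl | h
  · simp [h, h.ne]
  · simp
  · simp [h, h.ne']

theorem abs_sign_le_one (a : α) : |(SignType.sign a : α)| ≤ 1 := by
  rw [abs_sign_eq_ite]
  split_ifs <;> norm_num

theorem mul_le_abs_of_abs_le_one (a : α) {b : α} (hb : |b| ≤ 1) : a * b ≤ |a| :=
  calc a * b ≤ |a * b| := le_abs_self _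
    _ = |a| * |b| := abs_mul a b
    _ ≤ |a| := mul_le_of_le_one_right (abs_nonneg a) hb

theorem abs_eq_one_of_mul_eq_abs {a b : α} (ha : a ≠ 0) (h : a * b = |a|) : |b| = 1 := by
  refine mul_left_cancel₀ (abs_ne_zero.mpr ha) ?_
  rw [← abs_mul, h, abs_abs, mul_one]

theorem mul_eq_abs_of_sum_abs_eq_sum_mul {ι : Type*} {s : Finset ι} {x u : ι → α}
    (hu : ∀ i ∈ s, |u i| ≤ 1) (h : ∑ i ∈ s, |x i| = ∑ i ∈ s, x i * u i) :
    ∀ i ∈ s, x i * u i = |x i| :=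
  (sum_eq_sum_iff_of_le fun i hi => mul_le_abs_of_abs_le_one (x i) (hu i hi)).mp h.symm

end OrderedRing

theorem card0_eq_sum_ite {n : ℕ} (x : Fin n → ℝ) :
    (card0 x : ℝ) = ∑ i, if x i ≠ 0 then 1 else 0 := by
  rw [card0, ← natCast_card_filter, ← Set.ncard_coe_finset, coe_filter]
  simp only [mem_univ, true_and]

/-- The exact variational reformulation of cardinality (Yuan–Ghanem): for every `x ∈ ℝⁿ`,
`‖x‖₀ = min{‖u‖₁ : ‖x‖₁ = xᵀu, -1 ≤ u ≤ 1}`, the minimum being attained. -/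
theorem card_eq_min_l1_aux (n : ℕ) (x : Fin n → ℝ) :
    IsLeast {t : ℝ | ∃ u : Fin n → ℝ,
        (∀ i, -1 ≤ u i ∧ u i ≤ 1) ∧
        (∑ i, |x i|) = (∑ i, x i * u i) ∧
        t = ∑ i, |u i|}
      (card0 x : ℝ) := by
  refine ⟨⟨fun i => SignType.sign (x i), fun i => abs_le.mp (abs_sign_le_one _), ?_, ?_⟩, ?_⟩
  · simp only [self_mul_sign]
  · simp only [card0_eq_sum_ite, abs_sign_eq_ite]
  · rintro t ⟨u, hbox, hsum, rfl⟩
    have hxu := mul_eq_abs_of_sum_abs_eq_sum_mul (fun i _ => abs_le.mpr (hbox i)) hsum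
    rw [card0_eq_sum_ite]
    refine sum_le_sum fun i hi => ?_
    split_ifs with hx
    · exact (abs_eq_one_of_mul_eq_abs hx (hxu i hi)).ge
    · exact abs_nonneg _
end

section
/- Let A ∈ ℝ^{m×n} with nontrivial nullspace (ker A ≠ {0}), and define spark(A) = min{‖x‖₀ : Ax = 0, x ≠ 0}. Let k ∈ ℕ. Then the following are equivalent: (a) 2k < spark(A); (b) for every x̂ ∈ ℝⁿ with ‖x̂‖₀ ≤ k, x̂ is the unique optimal solution of the problem min{‖x‖₀ : Ax = Ax̂}, i.e., every x ≠ x̂ with Ax = Ax̂ satisfies ‖x‖₀ > ‖x̂‖₀. -/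
/-- The spark of a matrix: the minimum number of nonzeros of a nonzero nullspace vector. -/
noncomputable def spark {m n : ℕ} (A : Matrix (Fin m) (Fin n) ℝ) : ℕ :=
  sInf {k : ℕ | ∃ x : Fin n → ℝ, x ≠ 0 ∧ A.mulVec x = 0 ∧ card0 x = k}

/-!
If `x ≠ x̂` have the same image under `A`, then `x - x̂` is a nonzero kernel vector, so
`spark A ≤ ‖x - x̂‖₀ ≤ ‖x‖₀ + ‖x̂‖₀`; with `‖x‖₀ ≤ ‖x̂‖₀ ≤ k` this contradicts `2k < spark A`.
Conversely, a kernel vector `z` with `‖z‖₀ = spark A ≤ 2k` splits along its support as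
`z = x - x̂` with `‖x‖₀ ≤ ‖x̂‖₀ ≤ k`, and `x` is then a competitor to `x̂` that is no sparser.
-/

open Set Function Matrix

section card0

variable {n : ℕ}

lemma card0_eq_ncard_support (x : Fin n → ℝ) : card0 x = (support x).ncard := rfl

lemma card0_neg (x : Fin n → ℝ) : card0 (-x) = card0 x := by
  simp only [card0_eq_ncard_support, support_neg]

lemma card0_sub_le (x y : Fin n → ℝ) : card0 (x - y) ≤ card0 x + card0 y :=
  (ncard_le_ncard (support_sub x y)).trans (ncard_union_le _ _)

lemma card0_indicator_add_card0_indicator_compl (T : Set (Fin n)) (z : Fin n → ℝ) :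
    card0 (T.indicator z) + card0 (Tᶜ.indicator z) = card0 z := by
  simp only [card0_eq_ncard_support, support_indicator, inter_comm _ (support z),
    ← sdiff_eq]
  exact ncard_inter_add_ncard_sdiff_eq_ncard _ _

lemma exists_card0_indicator_eq (z : Fin n → ℝ) {j : ℕ} (hj : j ≤ card0 z) :
    ∃ T : Set (Fin n), card0 (T.indicator z) = j := by
  obtain ⟨T, hT, hTcard⟩ := exists_subset_card_eq (s := support z) hj
  refine ⟨T, ?_⟩
  rwa [card0_eq_ncard_support, support_indicator, inter_eq_left.mpr hT]

end card0

section spark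

variable {m n : ℕ} (A : Matrix (Fin m) (Fin n) ℝ)

lemma spark_le_card0 {x : Fin n → ℝ} (hx : x ≠ 0) (hAx : A *ᵥ x = 0) : spark A ≤ card0 x :=
  Nat.sInf_le ⟨x, hx, hAx, rfl⟩

lemma exists_card0_eq_spark (hker : ∃ x : Fin n → ℝ, x ≠ 0 ∧ A *ᵥ x = 0) :
    ∃ z : Fin n → ℝ, z ≠ 0 ∧ A *ᵥ z = 0 ∧ card0 z = spark A := by
  obtain ⟨x, hx, hAx⟩ := hker
  exact Nat.sInf_mem (s := {k | ∃ x : Fin n → ℝ, x ≠ 0 ∧ A *ᵥ x = 0 ∧ card0 x = k})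
    ⟨card0 x, x, hx, hAx, rfl⟩

lemma spark_le_card0_add_card0_of_mulVec_eq {x y : Fin n → ℝ} (hAxy : A *ᵥ x = A *ᵥ y)
    (hxy : x ≠ y) :
    spark A ≤ card0 x + card0 y :=
  (spark_le_card0 A (sub_ne_zero.mpr hxy) (by rw [mulVec_sub, hAxy, sub_self])).trans
    (card0_sub_le x y)

lemma exists_ne_card0_le_of_spark_le (hker : ∃ x : Fin n → ℝ, x ≠ 0 ∧ A *ᵥ x = 0) {k : ℕ}
    (hk : spark A ≤ 2 * k) :
    ∃ xhat x : Fin n → ℝ, card0 xhat ≤ k ∧ A *ᵥ x = A *ᵥ xhat ∧ x ≠ xhat ∧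
      card0 x ≤ card0 xhat := by
  obtain ⟨z, hz, hAz, hzcard⟩ := exists_card0_eq_spark A hker
  -- put `⌈‖z‖₀/2⌉ ≤ k` entries of `z` into `x̂` and the remaining `⌊‖z‖₀/2⌋` into `x`
  obtain ⟨T, hT⟩ := exists_card0_indicator_eq z (Nat.sub_le (card0 z) (card0 z / 2))
  have hsplit := card0_indicator_add_card0_indicator_compl T z
  have hz_eq : Tᶜ.indicator z - -T.indicator z = z := by
    rw [sub_neg_eq_add, add_comm, indicator_self_add_compl]
  refine ⟨-T.indicator z, Tᶜ.indicator z, ?_, ?_, ?_, ?_⟩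
  · rw [card0_neg]
    omega
  · rw [← sub_eq_zero, ← mulVec_sub, hz_eq, hAz]
  · rw [← sub_ne_zero, hz_eq]
    exact hz
  · rw [card0_neg]
    omega

end spark

/-- Classical uniqueness characterization for sparse recovery: all `k`-sparse vectors `x̂`
are the respective unique optimal solutions of `min{‖x‖₀ : Ax = Ax̂}` if and only if
`2k < spark(A)`. -/
theorem k_sparse_unique_iff_spark
    (m n : ℕ) (A : Matrix (Fin m) (Fin n) ℝ)
    (hker : ∃ x : Fin n → ℝ, x ≠ 0 ∧ A.mulVec x = 0) (k : ℕ) :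
    2 * k < spark A ↔
      ∀ xhat : Fin n → ℝ, card0 xhat ≤ k →
        ∀ x : Fin n → ℝ, A.mulVec x = A.mulVec xhat → x ≠ xhat →
          card0 xhat < card0 x := by
  constructor
  · intro hk xhat hxhat x hAx hne
    have := spark_le_card0_add_card0_of_mulVec_eq A hAx hne
    omega
  · intro hunique
    by_contra! hk
    obtain ⟨xhat, x, hxhat, hAx, hne, hle⟩ := exists_ne_card0_le_of_spark_le A hker hk
    exact (hunique xhat hxhat x hAx hne).not_ge hle
end

section
/- Let A ∈ ℝ^{m×n} and k ∈ ℕ. Say A satisfies the nullspace property (NSP) of order k if for every nonzero x ∈ ℝⁿ with Ax = 0 and every index set S ⊆ [n] with |S| ≤ k, one has Σ_{i∈S} |x_i| < (1/2)·Σ_{i∈[n]} |x_i| (equivalently, the order-k nullspace constant α_k is < 1/2). Then A satisfies the NSP of order k if and only if every x̂ ∈ ℝⁿ with ‖x̂‖₀ ≤ k is the unique optimal solution of the basis pursuit problem min{‖x‖₁ : Ax = Ax̂}, i.e., every x ≠ x̂ with Ax = Ax̂ satisfies ‖x‖₁ > ‖x̂‖₁. -/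
/-- The nullspace property (NSP) of order `k`: every nonzero nullspace vector has less than
half of its ℓ₁-mass on any index set of size at most `k`. -/
def NSP {m n : ℕ} (A : Matrix (Fin m) (Fin n) ℝ) (k : ℕ) : Prop :=
  ∀ x : Fin n → ℝ, x ≠ 0 → A.mulVec x = 0 →
    ∀ S : Finset (Fin n), S.card ≤ k →
      (∑ i ∈ S, |x i|) < (1 / 2) * ∑ i, |x i|

/-!
If `x̂` is supported on `S` and `Ax = Ax̂`, then `v = x - x̂` lies in the nullspace and the
triangle inequality on `S` gives `‖x‖₁ ≥ ‖x̂‖₁ + ‖v_{Sᶜ}‖₁ - ‖v_S‖₁`; the NSP says exactly that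
`‖v_S‖₁ < ‖v_{Sᶜ}‖₁`. Conversely, a nullspace vector `v` violating the NSP on `S` splits as
`v = v_S - (-v_{Sᶜ})` into a `k`-sparse vector `v_S` and a competitor `-v_{Sᶜ}` with the same
image and no larger ℓ₁-norm.
-/

open Finset

section L1

variable {ι : Type*} [Fintype ι] [DecidableEq ι]

theorem sum_lt_half_mul_sum_iff_lt_sum_compl (f : ι → ℝ) (S : Finset ι) :
    ∑ i ∈ S, f i < 1 / 2 * ∑ i, f i ↔ ∑ i ∈ S, f i < ∑ i ∈ Sᶜ, f i := by
  rw [← sum_add_sum_compl S f]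
  constructor <;> intro h <;> linarith

theorem sum_abs_add_sum_compl_abs_sub_sub_le {x xhat : ι → ℝ} {S : Finset ι}
    (hS : ∀ i ∉ S, xhat i = 0) :
    ∑ i, |xhat i| + (∑ i ∈ Sᶜ, |x i - xhat i| - ∑ i ∈ S, |x i - xhat i|) ≤ ∑ i, |x i| := by
  have on_S : ∑ i ∈ S, |xhat i| ≤ ∑ i ∈ S, |x i| + ∑ i ∈ S, |x i - xhat i| := by
    rw [← sum_add_distrib]
    refine sum_le_sum fun i _ => ?_
    have := abs_sub_abs_le_abs_sub (xhat i) (x i)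
    rw [abs_sub_comm] at this
    linarith
  have on_compl : ∑ i ∈ Sᶜ, |x i - xhat i| = ∑ i ∈ Sᶜ, |x i| :=
    sum_congr rfl fun i hi => by rw [hS i (mem_compl.mp hi), sub_zero]
  have zero_on_compl : ∑ i ∈ Sᶜ, |xhat i| = 0 :=
    sum_eq_zero fun i hi => by rw [hS i (mem_compl.mp hi), abs_zero]
  rw [← sum_add_sum_compl S fun i => |xhat i|, ← sum_add_sum_compl S fun i => |x i|]
  linarith

theorem sum_abs_piecewise (f g : ι → ℝ) (S : Finset ι) :
    ∑ i, |S.piecewise f g i| = ∑ i ∈ S, |f i| + ∑ i ∈ Sᶜ, |g i| := by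
  rw [← sum_add_sum_compl S]
  congr 1
  · exact sum_congr rfl fun i hi => by rw [S.piecewise_eq_of_mem f g hi]
  · exact sum_congr rfl fun i hi => by rw [S.piecewise_eq_of_notMem f g (mem_compl.mp hi)]

end L1

theorem card0_le_card_of_eq_zero {n : ℕ} {x : Fin n → ℝ} {S : Finset (Fin n)}
    (hS : ∀ i ∉ S, x i = 0) : card0 x ≤ S.card := by
  rw [← Set.ncard_coe_finset]
  exact Set.ncard_le_ncard fun i hi => by_contra fun h => hi (hS i h)

theorem card0_eq_card_filter_ne_zero {n : ℕ} (x : Fin n → ℝ) :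
    card0 x = #{i | x i ≠ 0} := by
  rw [card0, ← Set.ncard_coe_finset, coe_filter]
  simp

section Recovery

variable {m n : ℕ} {A : Matrix (Fin m) (Fin n) ℝ} {k : ℕ}

theorem NSP.sum_abs_lt {xhat x : Fin n → ℝ} (hA : NSP A k) (hk : card0 xhat ≤ k)
    (hAx : A.mulVec x = A.mulVec xhat) (hne : x ≠ xhat) :
    ∑ i, |xhat i| < ∑ i, |x i| := by
  set S : Finset (Fin n) := {i | xhat i ≠ 0}
  have hS : ∀ i ∉ S, xhat i = 0 := by simp [S]
  have hker : A.mulVec (x - xhat) = 0 := by rw [Matrix.mulVec_sub, hAx, sub_self]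
  have hv := hA (x - xhat) (sub_ne_zero.mpr hne) hker S (card0_eq_card_filter_ne_zero xhat ▸ hk)
  rw [sum_lt_half_mul_sum_iff_lt_sum_compl] at hv
  simp only [Pi.sub_apply] at hv
  have := sum_abs_add_sum_compl_abs_sub_sub_le (x := x) hS
  linarith

theorem nsp_of_sum_abs_lt
    (hrec : ∀ xhat : Fin n → ℝ, card0 xhat ≤ k →
      ∀ x : Fin n → ℝ, A.mulVec x = A.mulVec xhat → x ≠ xhat →
        (∑ i, |xhat i|) < ∑ i, |x i|) :
    NSP A k := by
  intro v hv hker S hS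
  rw [sum_lt_half_mul_sum_iff_lt_sum_compl]
  set xhat := S.piecewise v 0
  set x := S.piecewise 0 (-v)
  have hdiff : x - xhat = -v := by
    ext i
    by_cases hi : i ∈ S <;> simp [x, xhat, hi]
  have hAx : A.mulVec x = A.mulVec xhat := by
    rw [← sub_eq_zero, ← Matrix.mulVec_sub, hdiff, Matrix.mulVec_neg, hker, neg_zero]
  have hne : x ≠ xhat := fun h => hv (neg_eq_zero.mp (by rw [← hdiff, h, sub_self]))
  have hk : card0 xhat ≤ k :=
    (card0_le_card_of_eq_zero fun i hi => by simp [xhat, hi]).trans hS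
  simpa [x, xhat, sum_abs_piecewise] using hrec xhat hk x hAx hne

end Recovery

/-- Uniform sparse recovery (ℓ₀–ℓ₁-equivalence): `A` satisfies the NSP of order `k` iff
every `k`-sparse `x̂` is the unique optimal solution of the basis pursuit problem
`min{‖x‖₁ : Ax = Ax̂}`. -/
theorem nsp_iff_uniform_l1_recovery
    (m n : ℕ) (A : Matrix (Fin m) (Fin n) ℝ) (k : ℕ) :
    NSP A k ↔
      ∀ xhat : Fin n → ℝ, card0 xhat ≤ k →
        ∀ x : Fin n → ℝ, A.mulVec x = A.mulVec xhat → x ≠ xhat →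
          (∑ i, |xhat i|) < ∑ i, |x i| :=
  ⟨fun hA _ hk _ hAx hne => hA.sum_abs_lt hk hAx hne, nsp_of_sum_abs_lt⟩
end
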